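/- arXiv:1809.04965 — 2 statements merged into one kernel-verified Lean document; each statement's English description precedes it below -/
import Mathlib

section
/- Suppose a legal path ends at (𝐈 = (i_1,...,i_k), J). If a < b and both (i_a, j) and (i_b, j') are strands of τ(𝐈, J), then (i_a, j) is not nested under (i_b, j'), i.e., it is not the case that i_b < i_a < j < j'. -/
/-- A `(k,n)`-partial noncrossing pairing: a noncrossing matching `τ` (a set of pairs
`(a,b)` with `a < b`, pairwise disjoint endpoints in `{1,…,n}`, no two pairs crossing)
of a subset of `{1,…,n}`, together with a set `T` of marked vertices disjoint from the
endpoints, with `|T| + |τ| = k`. -/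
def IsPNP (k n : ℕ) (τ : Finset (ℕ × ℕ)) (T : Finset ℕ) : Prop :=
  (∀ p ∈ τ, p.1 < p.2 ∧ p.1 ∈ Finset.Icc 1 n ∧ p.2 ∈ Finset.Icc 1 n) ∧
  T ⊆ Finset.Icc 1 n ∧
  (∀ p ∈ τ, ∀ q ∈ τ, p ≠ q → p.1 ≠ q.1 ∧ p.1 ≠ q.2 ∧ p.2 ≠ q.1 ∧ p.2 ≠ q.2) ∧
  (∀ p ∈ τ, p.1 ∉ T ∧ p.2 ∉ T) ∧
  (∀ p ∈ τ, ∀ q ∈ τ, ¬(p.1 < q.1 ∧ q.1 < p.2 ∧ p.2 < q.2)) ∧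
  T.card + τ.card = k

/-- The map `θ` from partial noncrossing pairings to pairs of `k`-subsets:
`I₁ = T ∪ {smaller endpoints}`, `I₂ = T ∪ {larger endpoints}`. -/
def theta (τ : Finset (ℕ × ℕ)) (T : Finset ℕ) : Finset ℕ × Finset ℕ :=
  (T ∪ τ.image Prod.fst, T ∪ τ.image Prod.snd)

/-- `(I,J)` is a standard pair of `k`-subsets of `{1,…,n}`: the `r`-th smallest element
of `I` is at most the `r`-th smallest element of `J` for all `r` (so `I` and `J` form
the two columns of a semistandard tableau of shape `2^k`). -/
def IsStandardPair (k n : ℕ) (I J : Finset ℕ) : Prop :=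
  I.card = k ∧ J.card = k ∧ I ⊆ Finset.Icc 1 n ∧ J ⊆ Finset.Icc 1 n ∧
  ∀ r, r < k → (I.sort (· ≤ ·)).getD r 0 ≤ (J.sort (· ≤ ·)).getD r 0

/-- `τ` is the partial noncrossing matching `θ⁻¹(I,J)` associated to the pair `(I,J)`:
the marked vertices are `I ∩ J`, and `θ` sends `(τ, I ∩ J)` to `(I,J)`. -/
def Matching (k n : ℕ) (I J : Finset ℕ) (τ : Finset (ℕ × ℕ)) : Prop :=
  IsPNP k n τ (I ∩ J) ∧ (I ∩ J) ∪ τ.image Prod.fst = I ∧ (I ∩ J) ∪ τ.image Prod.snd = J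

/-- The elements of a `k`-subset listed in increasing order, as a tuple. -/
def sortedTuple (k : ℕ) (I : Finset ℕ) : Fin k → ℕ := fun r =>
  (I.sort (· ≤ ·)).getD (r : ℕ) 0

/-- Componentwise (Gale) order on `k`-subsets: the `r`-th smallest element of `I` is at
most the `r`-th smallest element of `C` for all `r < k`. -/
def FLe (k : ℕ) (I C : Finset ℕ) : Prop :=
  ∀ r, r < k → (I.sort (· ≤ ·)).getD r 0 ≤ (C.sort (· ≤ ·)).getD r 0

/-- One swap step `(𝐈,J) →_a (𝐈',J')`: for a strand `(i_a, j)` of the matching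
`τ(𝐈,J)` (with `i_a` the `a`-th entry of the tuple `𝐈`), replace `i_a` by `j` in the
tuple and `j` by `i_a` in `J`, provided the resulting pair is standard. -/
def Step (k n : ℕ) (a : Fin k) (p q : (Fin k → ℕ) × Finset ℕ) : Prop :=
  ∃ τ j, Matching k n (Finset.univ.image p.1) p.2 τ ∧ (p.1 a, j) ∈ τ ∧
    q.1 = Function.update p.1 a j ∧ q.2 = insert (p.1 a) (p.2.erase j) ∧
    IsStandardPair k n (Finset.univ.image q.1) q.2

/-- A legal path: a sequence of swap steps with weakly decreasing indices
`a_1 ≥ a_2 ≥ ⋯ ≥ a_r`, recorded by its list of states and its list of indices. -/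
def IsLegalPath (k n : ℕ) (states : List ((Fin k → ℕ) × Finset ℕ))
    (idxs : List (Fin k)) : Prop :=
  states.length = idxs.length + 1 ∧
  (∀ t a p q, idxs[t]? = some a → states[t]? = some p →
    states[t + 1]? = some q → Step k n a p q) ∧
  idxs.Chain' (fun a b => b ≤ a)

/-!
Along a legal path two invariants are kept: every entry of the tuple in a position below the
index of the last step is smaller than all later entries, and no strand starting at a later
entry encloses a strand starting at an earlier one. Both hold for the increasing tuple at the
start.

A step along the strand `(i, j)` changes the matching only locally. Counting left minus right
endpoints up to `i` shows that the new pair can only have a matching if some strand encloses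
`(i, j)`. Replacing `(i, j)` and the innermost such strand `(x, y)` by `(x, i)` and `(j, y)`
gives a noncrossing matching with the new endpoint sets, hence the new matching, since a
noncrossing matching is determined by its endpoint sets. As later steps use indices at most the
current one, a case check on the two new strands shows that no nesting is created.
-/

open Finset Function

namespace LegalPath

structure IsNoncrossing (τ : Finset (ℕ × ℕ)) : Prop where
  fst_lt_snd : ∀ p ∈ τ, p.1 < p.2
  disjoint : ∀ p ∈ τ, ∀ q ∈ τ, p ≠ q → p.1 ≠ q.1 ∧ p.1 ≠ q.2 ∧ p.2 ≠ q.1 ∧ p.2 ≠ q.2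
  not_cross : ∀ p ∈ τ, ∀ q ∈ τ, ¬(p.1 < q.1 ∧ q.1 < p.2 ∧ p.2 < q.2)

namespace IsNoncrossing

variable {τ σ : Finset (ℕ × ℕ)} {i j x y : ℕ}

theorem snd_eq_of_fst_eq (hτ : IsNoncrossing τ) {a b b' : ℕ} (h : (a, b) ∈ τ)
    (h' : (a, b') ∈ τ) : b = b' := by
  by_contra hne
  exact (hτ.disjoint _ h _ h' (by simpa using hne)).1 rfl

theorem fst_eq_of_snd_eq (hτ : IsNoncrossing τ) {a a' b : ℕ} (h : (a, b) ∈ τ)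
    (h' : (a', b) ∈ τ) : a = a' := by
  by_contra hne
  exact (hτ.disjoint _ h _ h' (by simpa using hne)).2.2.2 rfl

theorem fst_ne_snd (hτ : IsNoncrossing τ) {a b c d : ℕ} (h : (a, b) ∈ τ) (h' : (c, d) ∈ τ) :
    a ≠ d := by
  rintro rfl
  have := hτ.fst_lt_snd _ h
  have := hτ.fst_lt_snd _ h'
  exact (hτ.disjoint _ h _ h' (by simp; omega)).2.1 rfl

theorem ne_endpoints_of_ne (hτ : IsNoncrossing τ) (hij : (i, j) ∈ τ) (hxy : (x, y) ∈ τ)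
    {s : ℕ × ℕ} (hs : s ∈ τ) (h₁ : s ≠ (i, j)) (h₂ : s ≠ (x, y)) :
    s.1 ≠ i ∧ s.1 ≠ j ∧ s.2 ≠ i ∧ s.2 ≠ j ∧ s.1 ≠ x ∧ s.1 ≠ y ∧ s.2 ≠ x ∧ s.2 ≠ y :=
  have h₁ := hτ.disjoint s hs _ hij h₁
  have h₂ := hτ.disjoint s hs _ hxy h₂
  ⟨h₁.1, h₁.2.1, h₁.2.2.1, h₁.2.2.2, h₂.1, h₂.2.1, h₂.2.2.1, h₂.2.2.2⟩

theorem snd_lt_of_fst_mem (hτ : IsNoncrossing τ) {a b c d : ℕ} (h : (a, b) ∈ τ)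
    (h' : (c, d) ∈ τ) (hac : a < c) (hcb : c < b) : d < b := by
  have hdb : d ≠ b := fun hdb => by
    have := hτ.fst_eq_of_snd_eq h (hdb ▸ h'); omega
  have := hτ.not_cross _ h _ h'
  simp only at this
  omega

theorem fst_lt_of_snd_mem (hτ : IsNoncrossing τ) {a b c d : ℕ} (h : (a, b) ∈ τ)
    (h' : (c, d) ∈ τ) (had : a < d) (hdb : d < b) : a < c := by
  have hca : c ≠ a := fun hca => by
    have := hτ.snd_eq_of_fst_eq h (hca ▸ h'); omega
  have := hτ.not_cross _ h' _ h
  have := hτ.fst_lt_snd _ h'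
  simp only at this
  omega

/-- If `x` had partners `y₂ < y₁`, the partner `u` of `y₂` in `σ` would have a partner
`v < y₂` in `τ`: the same configuration on the shorter interval `[u, y₂]`. -/
theorem snd_le_of_image_eq (hτ : IsNoncrossing τ) (hσ : IsNoncrossing σ)
    (hfst : τ.image Prod.fst = σ.image Prod.fst) (hsnd : τ.image Prod.snd = σ.image Prod.snd)
    {x y₁ y₂ : ℕ} (h₁ : (x, y₂) ∈ τ) (h₂ : (x, y₁) ∈ σ) : y₁ ≤ y₂ := by
  induction hd : y₁ - x using Nat.strong_induction_on generalizing x y₁ y₂ with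
  | _ d ih =>
  by_contra! hlt
  have hxy₂ := hτ.fst_lt_snd _ h₁
  obtain ⟨u, hu⟩ : ∃ u, (u, y₂) ∈ σ := by
    simpa using (hsnd ▸ mem_image_of_mem Prod.snd h₁ : y₂ ∈ σ.image Prod.snd)
  have hxu : x < u := hσ.fst_lt_of_snd_mem h₂ hu hxy₂ hlt
  obtain ⟨v, hv⟩ : ∃ v, (u, v) ∈ τ := by
    simpa using (hfst ▸ mem_image_of_mem Prod.fst hu : u ∈ τ.image Prod.fst)
  have hvy₂ : v < y₂ := hτ.snd_lt_of_fst_mem h₁ hv hxu (hσ.fst_lt_snd _ hu)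
  exact absurd (ih _ (by omega) hv hu rfl) (by omega)

theorem subset_of_image_eq (hτ : IsNoncrossing τ) (hσ : IsNoncrossing σ)
    (hfst : τ.image Prod.fst = σ.image Prod.fst) (hsnd : τ.image Prod.snd = σ.image Prod.snd) :
    τ ⊆ σ := by
  rintro ⟨x, y⟩ h
  obtain ⟨y', h'⟩ : ∃ y', (x, y') ∈ σ := by
    simpa using (hfst ▸ mem_image_of_mem Prod.fst h : x ∈ σ.image Prod.fst)
  have := hτ.snd_le_of_image_eq hσ hfst hsnd h h'
  have := hσ.snd_le_of_image_eq hτ hfst.symm hsnd.symm h' h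
  rwa [show y = y' by omega]

theorem eq_of_image_eq (hτ : IsNoncrossing τ) (hσ : IsNoncrossing σ)
    (hfst : τ.image Prod.fst = σ.image Prod.fst) (hsnd : τ.image Prod.snd = σ.image Prod.snd) :
    τ = σ :=
  (hτ.subset_of_image_eq hσ hfst hsnd).antisymm (hσ.subset_of_image_eq hτ hfst.symm hsnd.symm)

theorem card_image_fst_inter_Iic (hτ : IsNoncrossing τ) (v : ℕ) :
    #(τ.image Prod.fst ∩ Iic v) =
      #(τ.image Prod.snd ∩ Iic v) + #{s ∈ τ | s.1 ≤ v ∧ v < s.2} := by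
  have hfst : τ.image Prod.fst ∩ Iic v = {s ∈ τ | s.1 ≤ v}.image Prod.fst := by ext; simp
  have hsnd : τ.image Prod.snd ∩ Iic v = {s ∈ τ | s.2 ≤ v}.image Prod.snd := by ext; simp
  rw [hfst, hsnd, card_image_of_injOn, card_image_of_injOn,
    ← card_filter_add_card_filter_not (s := {s ∈ τ | s.1 ≤ v}) (fun s => s.2 ≤ v),
    filter_filter, filter_filter]
  · congr 2 <;> refine filter_congr fun s hs => ?_ <;> have := hτ.fst_lt_snd s hs <;> omega
  · intro s hs t ht hst
    by_contra hne
    exact (hτ.disjoint s (mem_filter.mp hs).1 t (mem_filter.mp ht).1 hne).2.2.2 hst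
  · intro s hs t ht hst
    by_contra hne
    exact (hτ.disjoint s (mem_filter.mp hs).1 t (mem_filter.mp ht).1 hne).1 hst

/-- At `v = i` the left-minus-right endpoint count of `σ` is that of `τ` minus two, so at
least two strands of `τ` are open at `i`. -/
theorem exists_max_enclosing (hτ : IsNoncrossing τ) (hσ : IsNoncrossing σ) (hij : (i, j) ∈ τ)
    (hfst : σ.image Prod.fst = insert j ((τ.image Prod.fst).erase i))
    (hsnd : σ.image Prod.snd = insert i ((τ.image Prod.snd).erase j)) :
    ∃ x y, (x, y) ∈ τ ∧ x < i ∧ j < y ∧ ∀ s ∈ τ, s.1 < i → j < s.2 → s.1 ≤ x := by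
  have hij_lt := hτ.fst_lt_snd _ hij
  have hcount := hσ.card_image_fst_inter_Iic i
  have hfst_le : σ.image Prod.fst ∩ Iic i = (τ.image Prod.fst ∩ Iic i).erase i := by
    ext z; simp only [hfst, mem_inter, mem_insert, mem_erase, mem_Iic]; grind
  have hsnd_le : σ.image Prod.snd ∩ Iic i = insert i (τ.image Prod.snd ∩ Iic i) := by
    ext z; simp only [hsnd, mem_inter, mem_insert, mem_erase, mem_Iic]; grind
  have hi_fst : i ∈ τ.image Prod.fst ∩ Iic i := by simpa using ⟨j, hij⟩
  have hi_snd : i ∉ τ.image Prod.snd ∩ Iic i := by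
    simpa using fun a ha => hτ.fst_ne_snd hij ha rfl
  rw [hfst_le, hsnd_le, card_erase_of_mem hi_fst, card_insert_of_notMem hi_snd,
    hτ.card_image_fst_inter_Iic i] at hcount
  obtain ⟨⟨u, v⟩, huv, hne⟩ := exists_mem_ne (s := {s ∈ τ | s.1 ≤ i ∧ i < s.2}) (by omega) (i, j)
  simp only [mem_filter] at huv
  have hui : u < i := lt_of_le_of_ne huv.2.1 fun hui => hne <| by
    subst hui; rw [hτ.snd_eq_of_fst_eq huv.1 hij]
  obtain ⟨⟨x, y⟩, hxy, hmax⟩ := exists_max_image {s ∈ τ | s.1 < i ∧ j < s.2} Prod.fst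
    ⟨(u, v), mem_filter.mpr ⟨huv.1, hui, hτ.snd_lt_of_fst_mem huv.1 hij hui huv.2.2⟩⟩
  simp only [mem_filter] at hxy
  exact ⟨x, y, hxy.1, hxy.2.1, hxy.2.2, fun s hs h₁ h₂ => hmax s (mem_filter.mpr ⟨hs, h₁, h₂⟩)⟩

end IsNoncrossing

/-- The matching after a swap along the strand `(i, j)`, when `(x, y)` is the innermost strand
enclosing it. -/
def unnest (τ : Finset (ℕ × ℕ)) (i j x y : ℕ) : Finset (ℕ × ℕ) :=
  insert (x, i) (insert (j, y) ((τ.erase (i, j)).erase (x, y)))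

variable {τ σ : Finset (ℕ × ℕ)} {i j x y : ℕ}

theorem mem_unnest {s : ℕ × ℕ} :
    s ∈ unnest τ i j x y ↔ s = (x, i) ∨ s = (j, y) ∨ (s ∈ τ ∧ s ≠ (i, j) ∧ s ≠ (x, y)) := by
  simp only [unnest, mem_insert, mem_erase]
  tauto

theorem isNoncrossing_unnest (hτ : IsNoncrossing τ) (hij : (i, j) ∈ τ) (hxy : (x, y) ∈ τ)
    (hxi : x < i) (hjy : j < y) (hmax : ∀ s ∈ τ, s.1 < i → j < s.2 → s.1 ≤ x) :
    IsNoncrossing (unnest τ i j x y) := by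
  have hij_lt := hτ.fst_lt_snd _ hij
  refine ⟨fun s hs => ?_, fun s hs t ht hne => ?_, fun s hs t ht => ?_⟩
  · rcases mem_unnest.mp hs with rfl | rfl | ⟨hs, -, -⟩
    exacts [hxi, hjy, hτ.fst_lt_snd s hs]
  · rcases mem_unnest.mp hs with rfl | rfl | ⟨hs, hs₁, hs₂⟩ <;>
      rcases mem_unnest.mp ht with rfl | rfl | ⟨ht, ht₁, ht₂⟩
    all_goals
      try have := hτ.ne_endpoints_of_ne hij hxy hs hs₁ hs₂
      try have := hτ.ne_endpoints_of_ne hij hxy ht ht₁ ht₂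
    all_goals first
      | exact absurd rfl hne
      | exact hτ.disjoint s hs t ht hne
      | (simp only; omega)
  · rcases mem_unnest.mp hs with rfl | rfl | ⟨hs, hs₁, hs₂⟩ <;>
      rcases mem_unnest.mp ht with rfl | rfl | ⟨ht, ht₁, ht₂⟩
    any_goals omega
    · obtain ⟨t₁, t₂⟩ := t
      rintro ⟨hxt, hti, hit⟩
      have := hτ.snd_lt_of_fst_mem hxy ht hxt (by omega)
      have := hmax _ ht hti (hτ.snd_lt_of_fst_mem ht hij hti hit)
      omega
    · exact fun h => hτ.not_cross _ hxy _ ht ⟨by omega, h.2⟩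
    · exact fun h => hτ.not_cross _ hs _ hxy ⟨h.1, h.2.1, by omega⟩
    · obtain ⟨s₁, s₂⟩ := s
      rintro ⟨hsj, hjs, hsy⟩
      rcases lt_or_gt_of_ne (hτ.ne_endpoints_of_ne hij hxy hs hs₁ hs₂).1 with hsi | hsi
      · have := hmax _ hs hsi (by omega)
        have := (hτ.ne_endpoints_of_ne hij hxy hs hs₁ hs₂).2.2.2.2.1
        exact hτ.not_cross _ hs _ hxy ⟨by omega, by omega, hsy⟩
      · exact hτ.not_cross _ hij _ hs ⟨hsi, hsj, hjs⟩
    · exact hτ.not_cross s hs t ht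

theorem image_fst_unnest (hτ : IsNoncrossing τ) (hij : (i, j) ∈ τ) (hxy : (x, y) ∈ τ)
    (hxi : x < i) :
    (unnest τ i j x y).image Prod.fst = insert j ((τ.image Prod.fst).erase i) := by
  ext z
  simp only [mem_image, mem_insert, mem_erase]
  constructor
  · rintro ⟨s, hs, rfl⟩
    rcases mem_unnest.mp hs with rfl | rfl | ⟨hs, hs₁, hs₂⟩
    · exact .inr ⟨hxi.ne, _, hxy, rfl⟩
    · exact .inl rfl
    · exact .inr ⟨(hτ.ne_endpoints_of_ne hij hxy hs hs₁ hs₂).1, s, hs, rfl⟩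
  · rintro (rfl | ⟨hzi, s, hs, rfl⟩)
    · exact ⟨_, mem_unnest.mpr (.inr (.inl rfl)), rfl⟩
    · by_cases hs₂ : s = (x, y)
      · exact ⟨_, mem_unnest.mpr (.inl rfl), by simp [hs₂]⟩
      · have hs₁ : s ≠ (i, j) := by rintro rfl; exact hzi rfl
        exact ⟨s, mem_unnest.mpr (.inr (.inr ⟨hs, hs₁, hs₂⟩)), rfl⟩

theorem image_snd_unnest (hτ : IsNoncrossing τ) (hij : (i, j) ∈ τ) (hxy : (x, y) ∈ τ)
    (hjy : j < y) :
    (unnest τ i j x y).image Prod.snd = insert i ((τ.image Prod.snd).erase j) := by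
  ext z
  simp only [mem_image, mem_insert, mem_erase]
  constructor
  · rintro ⟨s, hs, rfl⟩
    rcases mem_unnest.mp hs with rfl | rfl | ⟨hs, hs₁, hs₂⟩
    · exact .inl rfl
    · exact .inr ⟨hjy.ne', _, hxy, rfl⟩
    · exact .inr ⟨(hτ.ne_endpoints_of_ne hij hxy hs hs₁ hs₂).2.2.2.1, s, hs, rfl⟩
  · rintro (rfl | ⟨hzj, s, hs, rfl⟩)
    · exact ⟨_, mem_unnest.mpr (.inl rfl), rfl⟩
    · by_cases hs₂ : s = (x, y)
      · exact ⟨_, mem_unnest.mpr (.inr (.inl rfl)), by simp [hs₂]⟩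
      · have hs₁ : s ≠ (i, j) := by rintro rfl; exact hzj rfl
        exact ⟨s, mem_unnest.mpr (.inr (.inr ⟨hs, hs₁, hs₂⟩)), rfl⟩

theorem IsNoncrossing.eq_unnest (hτ : IsNoncrossing τ) (hσ : IsNoncrossing σ) (hij : (i, j) ∈ τ)
    (hfst : σ.image Prod.fst = insert j ((τ.image Prod.fst).erase i))
    (hsnd : σ.image Prod.snd = insert i ((τ.image Prod.snd).erase j)) :
    ∃ x y, (x, y) ∈ τ ∧ x < i ∧ j < y ∧ σ = unnest τ i j x y := by
  obtain ⟨x, y, hxy, hxi, hjy, hmax⟩ := hτ.exists_max_enclosing hσ hij hfst hsnd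
  refine ⟨x, y, hxy, hxi, hjy,
    hσ.eq_of_image_eq (isNoncrossing_unnest hτ hij hxy hxi hjy hmax) ?_ ?_⟩
  · rw [hfst, image_fst_unnest hτ hij hxy hxi]
  · rw [hsnd, image_snd_unnest hτ hij hxy hjy]

end LegalPath

theorem Finset.image_univ_update {α β : Type*} [Fintype α] [DecidableEq α] [DecidableEq β]
    {f : α → β} (hf : Injective f) (a : α) (b : β) :
    univ.image (update f a b) = insert b ((univ.image f).erase (f a)) := by
  ext z
  simp only [mem_image, mem_univ, true_and, mem_insert, mem_erase]
  constructor
  · rintro ⟨a', rfl⟩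
    by_cases ha : a' = a
    · simp [ha]
    · rw [update_of_ne ha]
      exact .inr ⟨hf.ne ha, a', rfl⟩
  · rintro (rfl | ⟨hne, a', rfl⟩)
    · exact ⟨a, by simp⟩
    · exact ⟨a', update_of_ne (fun ha => hne (by rw [ha])) _ _⟩

open LegalPath

namespace Matching

variable {k n : ℕ} {I J : Finset ℕ} {τ σ : Finset (ℕ × ℕ)}

theorem isNoncrossing (h : Matching k n I J τ) : IsNoncrossing τ :=
  ⟨fun p hp => (h.1.1 p hp).1, h.1.2.2.1, h.1.2.2.2.2.1⟩

theorem disjoint_image_fst (h : Matching k n I J τ) : Disjoint (I ∩ J) (τ.image Prod.fst) :=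
  disjoint_left.mpr fun _ hT hz => by
    obtain ⟨s, hs, rfl⟩ := mem_image.mp hz
    exact (h.1.2.2.2.1 s hs).1 hT

theorem disjoint_image_snd (h : Matching k n I J τ) : Disjoint (I ∩ J) (τ.image Prod.snd) :=
  disjoint_left.mpr fun _ hT hz => by
    obtain ⟨s, hs, rfl⟩ := mem_image.mp hz
    exact (h.1.2.2.2.1 s hs).2 hT

theorem image_fst (h : Matching k n I J τ) : τ.image Prod.fst = I \ (I ∩ J) := by
  rw [← union_sdiff_cancel_left h.disjoint_image_fst, h.2.1]

theorem image_snd (h : Matching k n I J τ) : τ.image Prod.snd = J \ (I ∩ J) := by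
  rw [← union_sdiff_cancel_left h.disjoint_image_snd, h.2.2]

theorem card_left (h : Matching k n I J τ) : #I = k := by
  rw [← h.2.1, card_union_of_disjoint h.disjoint_image_fst,
    card_image_of_injOn fun s hs t ht hst => by_contra fun hne => (h.1.2.2.1 s hs t ht hne).1 hst]
  exact h.1.2.2.2.2.2

theorem injective {f : Fin k → ℕ} (h : Matching k n (univ.image f) J τ) : Injective f := by
  rw [← Set.injOn_univ, ← coe_univ, ← card_image_iff, h.card_left, card_univ, Fintype.card_fin]

theorem image_of_step {f : Fin k → ℕ} {c : Fin k} {j : ℕ}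
    (h : Matching k n (univ.image f) J τ) (hj : (f c, j) ∈ τ)
    (h' : Matching k n (univ.image (update f c j)) (insert (f c) (J.erase j)) σ) :
    σ.image Prod.fst = insert j ((τ.image Prod.fst).erase (f c)) ∧
      σ.image Prod.snd = insert (f c) ((τ.image Prod.snd).erase j) := by
  have hτ := h.isNoncrossing
  have hj_fst : j ∉ τ.image Prod.fst := by simpa using fun v hv => hτ.fst_ne_snd hv hj rfl
  have hi_snd : f c ∉ τ.image Prod.snd := by simpa using fun u hu => hτ.fst_ne_snd hj hu rfl
  have hi_fst : f c ∈ τ.image Prod.fst := mem_image_of_mem Prod.fst hj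
  have hj_snd : j ∈ τ.image Prod.snd := mem_image_of_mem Prod.snd hj
  rw [h.image_fst] at hj_fst hi_fst ⊢
  rw [h.image_snd] at hi_snd hj_snd ⊢
  rw [h'.image_fst, h'.image_snd, image_univ_update h.injective]
  constructor <;> ext z <;> simp only [mem_sdiff, mem_inter, mem_insert, mem_erase] at * <;> grind

end Matching

namespace LegalPath

variable {k n : ℕ}

def IncreasingBelow (f : Fin k → ℕ) (m : ℕ) : Prop :=
  ∀ a b : Fin k, a < b → (a : ℕ) < m → f a < f b

theorem IncreasingBelow.mono {f : Fin k → ℕ} {m m' : ℕ} (h : IncreasingBelow f m')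
    (hm : m ≤ m') : IncreasingBelow f m :=
  fun a b hab ha => h a b hab (ha.trans_le hm)

theorem IncreasingBelow.update {f : Fin k → ℕ} {c : Fin k} {j : ℕ} (h : IncreasingBelow f c)
    (hj : f c < j) : IncreasingBelow (update f c j) c := by
  intro a b hab ha
  have hac : a ≠ c := by rintro rfl; omega
  rw [update_of_ne hac]
  by_cases hbc : b = c
  · subst hbc
    rw [update_self]
    exact (h a b hab ha).trans hj
  · rw [update_of_ne hbc]
    exact h a b hab ha

def NoNesting (f : Fin k → ℕ) (τ : Finset (ℕ × ℕ)) : Prop :=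
  ∀ a b : Fin k, a < b → ∀ j j' : ℕ, (f a, j) ∈ τ → (f b, j') ∈ τ →
    ¬(f b < f a ∧ f a < j ∧ j < j')

theorem IncreasingBelow.noNesting {f : Fin k → ℕ} (h : IncreasingBelow f k)
    (τ : Finset (ℕ × ℕ)) : NoNesting f τ :=
  fun a b hab _ _ _ _ hnest => by have := h a b hab a.isLt; omega

theorem NoNesting.unnest {τ : Finset (ℕ × ℕ)} {f : Fin k → ℕ} {c : Fin k} {j x y : ℕ}
    (hN : NoNesting f τ) (hτ : IsNoncrossing τ) (hf : Injective f) (hj : ∀ b, f b ≠ j)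
    (hinc : IncreasingBelow f c) (hij : (f c, j) ∈ τ) (hxy : (x, y) ∈ τ)
    (hjy : j < y) : NoNesting (update f c j) (unnest τ (f c) j x y) := by
  intro a b hab j₁ j₂ ha hb hnest
  have hcj : f c < j := hτ.fst_lt_snd _ hij
  have hca : c ≤ a := not_lt.mp fun hac => by
    have := hinc.update hcj a b hab hac
    omega
  have hbc : b ≠ c := (hca.trans_lt hab).ne'
  rw [update_of_ne hbc] at hb hnest
  rcases mem_unnest.mp hb with hbx | hbj | ⟨hbτ, -, -⟩
  · obtain ⟨rfl, rfl⟩ := Prod.mk.inj hbx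
    rcases eq_or_ne c a with rfl | hac
    · rw [update_self] at hnest
      omega
    rw [update_of_ne hac.symm] at ha hnest
    rcases mem_unnest.mp ha with hax | haj | ⟨haτ, -, -⟩
    · have := Prod.mk.inj hax
      omega
    · exact hj a (Prod.mk.inj haj).1
    · exact hN a b hab j₁ y haτ hxy ⟨hnest.1, hnest.2.1, by omega⟩
  · exact hj b (Prod.mk.inj hbj).1
  rcases eq_or_ne c a with rfl | hac
  · rw [update_self] at ha hnest
    rcases mem_unnest.mp ha with hax | haj | ⟨haτ, -, -⟩
    · have := Prod.mk.inj hax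
      omega
    · obtain ⟨-, rfl⟩ := Prod.mk.inj haj
      have hbc : f b < f c := lt_of_le_of_ne (not_lt.mp fun hcb =>
        absurd (hτ.snd_lt_of_fst_mem hij hbτ hcb hnest.1) (by omega)) (hf.ne hbc)
      exact hN c b hab j j₂ hij hbτ ⟨hbc, hcj, by omega⟩
    · exact hτ.fst_ne_snd haτ hij rfl
  · rw [update_of_ne hac.symm] at ha hnest
    rcases mem_unnest.mp ha with hax | haj | ⟨haτ, -, -⟩
    · obtain ⟨hfa, rfl⟩ := Prod.mk.inj hax
      rw [hfa] at hnest
      exact hN a b hab y j₂ (hfa ▸ hxy) hbτ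
        ⟨by omega, by omega, hτ.snd_lt_of_fst_mem hbτ hxy hnest.1 (by omega)⟩
    · exact hj a (Prod.mk.inj haj).1
    · exact hN a b hab j₁ j₂ haτ hbτ hnest

theorem noNesting_of_step {c : Fin k} {p q : (Fin k → ℕ) × Finset ℕ} (hstep : Step k n c p q)
    (hinc : IncreasingBelow p.1 c)
    (hN : ∀ τ, Matching k n (univ.image p.1) p.2 τ → NoNesting p.1 τ) :
    IncreasingBelow q.1 c ∧ ∀ σ, Matching k n (univ.image q.1) q.2 σ → NoNesting q.1 σ := by
  obtain ⟨f, J⟩ := p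
  obtain ⟨g, J'⟩ := q
  obtain ⟨τ, j, hM, hij, rfl : g = update f c j, rfl : J' = _, -⟩ := hstep
  dsimp only at hinc hN hM hij ⊢
  have hτ := hM.isNoncrossing
  have hcj : f c < j := hτ.fst_lt_snd _ hij
  refine ⟨hinc.update hcj, fun σ hσ => ?_⟩
  obtain ⟨hfst, hsnd⟩ := hM.image_of_step hij hσ
  obtain ⟨x, y, hxy, hxi, hjy, rfl⟩ := hτ.eq_unnest hσ.isNoncrossing hij hfst hsnd
  refine (hN τ hM).unnest hτ hM.injective (fun b hb => ?_) hinc hij hxy hjy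
  have hbc : b ≠ c := by rintro rfl; omega
  exact hbc (hσ.injective (by rw [update_of_ne hbc, update_self, hb]))

theorem IsLegalPath.step_head {s₀ s₁ : (Fin k → ℕ) × Finset ℕ} {rest : List _} {c : Fin k}
    {cs : List (Fin k)} (h : IsLegalPath k n (s₀ :: s₁ :: rest) (c :: cs)) :
    Step k n c s₀ s₁ :=
  h.2.1 0 c s₀ s₁ rfl rfl rfl

theorem IsLegalPath.tail {s₀ : (Fin k → ℕ) × Finset ℕ} {states : List _} {c : Fin k}
    {cs : List (Fin k)} (h : IsLegalPath k n (s₀ :: states) (c :: cs)) :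
    IsLegalPath k n states cs :=
  ⟨by simpa using h.1, fun t a p q => h.2.1 (t + 1) a p q, h.2.2.tail⟩

theorem IsLegalPath.noNesting_of_getLast? {states : List ((Fin k → ℕ) × Finset ℕ)}
    {idxs : List (Fin k)} (h : IsLegalPath k n states idxs) {p₀ pₗ : (Fin k → ℕ) × Finset ℕ}
    (hhead : states.head? = some p₀) (hlast : states.getLast? = some pₗ) {m : ℕ}
    (hm : ∀ a ∈ idxs, (a : ℕ) ≤ m) (hinc : IncreasingBelow p₀.1 m)
    (hN : ∀ τ, Matching k n (univ.image p₀.1) p₀.2 τ → NoNesting p₀.1 τ) :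
    ∀ τ, Matching k n (univ.image pₗ.1) pₗ.2 τ → NoNesting pₗ.1 τ := by
  induction idxs generalizing states p₀ m with
  | nil =>
    obtain _ | ⟨s₀, _ | ⟨_, _⟩⟩ := states <;> simp [IsLegalPath] at h
    obtain rfl := Option.some.inj hhead
    obtain rfl := Option.some.inj hlast
    exact hN
  | cons c cs ih =>
    obtain _ | ⟨s₀, _ | ⟨s₁, rest⟩⟩ := states
    · simp at hhead
    · simpa using h.1
    obtain rfl := Option.some.inj hhead
    have hcs : ∀ a ∈ cs, a ≤ c := fun a ha =>
      (show List.IsChain (· ≥ ·) _ from h.2.2).rel_cons ha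
    obtain ⟨hinc', hN'⟩ := noNesting_of_step h.step_head (hinc.mono (hm c (by simp))) hN
    exact ih h.tail rfl (by rwa [List.getLast?_cons_cons] at hlast) hcs hinc' hN'

end LegalPath

theorem strictMono_sortedTuple {k : ℕ} {I : Finset ℕ} (hI : #I = k) :
    StrictMono (sortedTuple k I) := by
  intro a b hab
  have hlen : (I.sort (· ≤ ·)).length = k := by rw [length_sort, hI]
  have ha : (a : ℕ) < (I.sort (· ≤ ·)).length := hlen ▸ a.isLt
  have hb : (b : ℕ) < (I.sort (· ≤ ·)).length := hlen ▸ b.isLt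
  simp only [sortedTuple, List.getD_eq_getElem _ _ ha, List.getD_eq_getElem _ _ hb]
  exact I.sortedLT_sort (a := ⟨a, ha⟩) (b := ⟨b, hb⟩) hab

/-- Suppose a legal path starting from a standard pair `(I,J₀)` (with `I` listed in
increasing order) ends at `(II, J)`.  If `a < b` and both `(II a, j)` and `(II b, j')`
are strands of the matching `τ(II, J)`, then `(II a, j)` is not nested under
`(II b, j')`: it is not the case that `II b < II a < j < j'`. -/
theorem stmt_15 (k n : ℕ) (I J0 : Finset ℕ) (hIJ : IsStandardPair k n I J0)
    (states : List ((Fin k → ℕ) × Finset ℕ)) (idxs : List (Fin k))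
    (h : IsLegalPath k n states idxs)
    (hhead : states.head? = some (sortedTuple k I, J0))
    (II : Fin k → ℕ) (J : Finset ℕ) (hlast : states.getLast? = some (II, J)) :
    ∀ a b : Fin k, a < b → ∀ (τ : Finset (ℕ × ℕ)) (j j' : ℕ),
      Matching k n (Finset.univ.image II) J τ →
      (II a, j) ∈ τ → (II b, j') ∈ τ →
      ¬(II b < II a ∧ II a < j ∧ j < j') := by
  have hinc : IncreasingBelow (sortedTuple k I) k :=
    fun a b hab _ => strictMono_sortedTuple hIJ.1 hab
  intro a b hab τ j j' hM
  exact h.noNesting_of_getLast? hhead hlast (fun c _ => c.isLt.le) hinc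
    (fun τ _ => hinc.noNesting τ) τ hM a b hab j j'
end

section
/- For a standard pair (A,B) of k-subsets of [n] (the two columns of a semistandard 2-column tableau), the set Σ⁻_{A,B} defined recursively by Σ^{−,r}_{A,B} = {(i,j) : i ∈ A\B, j ∈ B\A, i<j, j−i=r, and neither i nor j occurs in Σ^{−,ℓ}_{A,B} for ℓ<r}, with Σ⁻_{A,B} = ⋃_{r≥1} Σ^{−,r}_{A,B}, equals the set of strands of the partial noncrossing matching θ^{−1}(A,B). -/
/-- `sigAux A B r` is the union of the levels `Σ^{−,ℓ}_{A,B}` for `ℓ ≤ r`: pairs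
`(i,j)` with `i ∈ A\B`, `j ∈ B\A`, `j − i = ℓ`, neither endpoint of which occurs in an
earlier level. -/
def sigAux (A B : Finset ℕ) : ℕ → Finset (ℕ × ℕ)
  | 0 => ∅
  | r + 1 =>
    sigAux A B r ∪
      (((A \ B) ×ˢ (B \ A)).filter fun p =>
        p.2 = p.1 + (r + 1) ∧
        ∀ q ∈ sigAux A B r, p.1 ≠ q.1 ∧ p.1 ≠ q.2 ∧ p.2 ≠ q.1 ∧ p.2 ≠ q.2)

/-- For a standard pair `(A,B)` of `k`-subsets of `{1,…,n}`, the set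
`Σ⁻_{A,B} = ⋃_{r ≥ 1} Σ^{−,r}_{A,B}` (all distances are at most `n`, so the union up
to level `n` suffices) equals the set of strands of the partial noncrossing matching
`θ⁻¹(A,B)`. -/
theorem stmt_19 (k n : ℕ) (A B : Finset ℕ) (h : IsStandardPair k n A B)
    (τ : Finset (ℕ × ℕ)) (hτ : Matching k n A B τ) :
    sigAux A B n = τ := by
  obtain ⟨⟨h1, h2, hdisj, hT, hnc, hcard⟩, hA, hB⟩ := hτ
  have hX : τ.image Prod.fst = A \ B := by
    ext a
    simp only [Finset.mem_image, Finset.mem_sdiff]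
    constructor
    · rintro ⟨p, hp, rfl⟩
      have haA : p.1 ∈ A := by
        rw [← hA]; exact Finset.mem_union_right _ (Finset.mem_image_of_mem _ hp)
      exact ⟨haA, fun hb => (hT p hp).1 (Finset.mem_inter.mpr ⟨haA, hb⟩)⟩
    · rintro ⟨haA, haB⟩
      rw [← hA] at haA
      rcases Finset.mem_union.mp haA with hh | hh
      · exact absurd (Finset.mem_inter.mp hh).2 haB
      · obtain ⟨p, hp, he⟩ := Finset.mem_image.mp hh; exact ⟨p, hp, he⟩
  have hY : τ.image Prod.snd = B \ A := by
    ext a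
    simp only [Finset.mem_image, Finset.mem_sdiff]
    constructor
    · rintro ⟨p, hp, rfl⟩
      have haB : p.2 ∈ B := by
        rw [← hB]; exact Finset.mem_union_right _ (Finset.mem_image_of_mem _ hp)
      exact ⟨haB, fun ha => (hT p hp).2 (Finset.mem_inter.mpr ⟨ha, haB⟩)⟩
    · rintro ⟨haB, haA⟩
      rw [← hB] at haB
      rcases Finset.mem_union.mp haB with hh | hh
      · exact absurd (Finset.mem_inter.mp hh).1 haA
      · obtain ⟨p, hp, he⟩ := Finset.mem_image.mp hh; exact ⟨p, hp, he⟩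
  have key : ∀ r, sigAux A B r = τ.filter (fun p => p.2 ≤ p.1 + r) := by
    intro r
    induction r with
    | zero =>
      show (∅ : Finset (ℕ × ℕ)) = _
      symm
      rw [Finset.filter_eq_empty_iff]
      intro p hp hle
      have := (h1 p hp).1
      omega
    | succ r ih =>
      show sigAux A B r ∪ _ = _
      rw [ih]
      ext p
      simp only [Finset.mem_union, Finset.mem_filter, Finset.mem_product,
        Finset.mem_sdiff]
      constructor
      · rintro (⟨hp, hd⟩ | ⟨⟨⟨hiA, hiB⟩, hjB, hjA⟩, hdd, hfree⟩)
        · exact ⟨hp, by omega⟩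
        · -- p.1 ∈ A\B, p.2 ∈ B\A, p.2 = p.1 + (r+1), endpoints free at level r
          have hi : p.1 ∈ τ.image Prod.fst := by
            rw [hX]; exact Finset.mem_sdiff.mpr ⟨hiA, hiB⟩
          have hj : p.2 ∈ τ.image Prod.snd := by
            rw [hY]; exact Finset.mem_sdiff.mpr ⟨hjB, hjA⟩
          obtain ⟨q, hq, hq1⟩ := Finset.mem_image.mp hi
          obtain ⟨q', hq', hq2⟩ := Finset.mem_image.mp hj
          by_cases hqq : q.2 = p.2
          · have : q = p := Prod.ext hq1 hqq
            rw [← this] at *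
            exact ⟨hq, by omega⟩
          by_cases hqq' : q'.1 = p.1
          · have : q' = p := Prod.ext hqq' hq2
            rw [← this] at *
            exact ⟨hq', by omega⟩
          exfalso
          have hql : q.1 < q.2 := (h1 q hq).1
          have hql' : q'.1 < q'.2 := (h1 q' hq').1
          have hqbig : ¬ (q.2 ≤ q.1 + r) := by
            intro hle
            exact (hfree q ⟨hq, hle⟩).1 hq1.symm
          have hqbig' : ¬ (q'.2 ≤ q'.1 + r) := by
            intro hle
            exact (hfree q' ⟨hq', hle⟩).2.2.2 hq2.symm
          -- crossing: q'.1 < q.1 < q'.2 < q.2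
          exact hnc q' hq' q hq ⟨by omega, by omega, by omega⟩
      · rintro ⟨hp, hd⟩
        rcases le_or_gt p.2 (p.1 + r) with hle | hgt
        · exact Or.inl ⟨hp, hle⟩
        · right
          have hlt : p.1 < p.2 := (h1 p hp).1
          have hi : p.1 ∈ A \ B := by rw [← hX]; exact Finset.mem_image_of_mem _ hp
          have hj : p.2 ∈ B \ A := by rw [← hY]; exact Finset.mem_image_of_mem _ hp
          refine ⟨⟨Finset.mem_sdiff.mp hi, Finset.mem_sdiff.mp hj⟩, by omega, ?_⟩
          intro q hq
          obtain ⟨hqτ, hqle⟩ := hq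
          have hne : p ≠ q := by
            intro he; rw [he] at hgt; omega
          exact hdisj p hp q hqτ hne
  have hfull : τ.filter (fun p => p.2 ≤ p.1 + n) = τ := by
    rw [Finset.filter_eq_self]
    intro p hp
    obtain ⟨_, hi, hj⟩ := h1 p hp
    have := (Finset.mem_Icc.mp hi).1
    have := (Finset.mem_Icc.mp hj).2
    omega
  rw [key n, hfull]
end
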